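/- Let K, L be convex bodies in ℝ³ containing the origin in their interiors, with relative quermassintegrals W₀, W₁, W₂, W₃ of K with respect to L. If K is in the class ℜ₁ as well as in the class ℜ₂ with respect to L, then for every t ≥ 0 the body K + tL is in the class ℜ₁ with respect to L; explicitly, if B₀(r) = 2W₁ r − W₀ − W₂ r² ≥ 0 and B₁(r) = 2W₂ r − W₁ − W₃ r² ≥ 0 for all r ∈ [r_o(K,L), R_o(K,L)], then 2W₁ᵗ r − W₀ᵗ − W₂ᵗ r² ≥ 0 for all r ∈ [r_o(K+tL, L), R_o(K+tL, L)], where Wᵢᵗ = Σ_{k=0}^{3−i} C(3−i,k) W_{i+k} t^k are the relative quermassintegrals of K + tL with respect to L. -/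

import Mathlib

open scoped Pointwise RealInnerProductSpace
open MeasureTheory Metric

noncomputable section

/-- The support function `h_K(u) = sup_{x ∈ K} ⟪x, u⟫` of a set `K ⊆ ℝ³`. -/
def supp (K : Set (EuclideanSpace ℝ (Fin 3))) (u : EuclideanSpace ℝ (Fin 3)) : ℝ :=
  sSup ((fun x => ⟪x, u⟫) '' K)

/-- `r_o(K,L) = min_{u ∈ S²} h_K(u)/h_L(u)`. -/
def rIn (K L : Set (EuclideanSpace ℝ (Fin 3))) : ℝ :=
  sInf ((fun u => supp K u / supp L u) '' sphere (0 : EuclideanSpace ℝ (Fin 3)) 1)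

/-- `R_o(K,L) = max_{u ∈ S²} h_K(u)/h_L(u)`. -/
def rOut (K L : Set (EuclideanSpace ℝ (Fin 3))) : ℝ :=
  sSup ((fun u => supp K u / supp L u) '' sphere (0 : EuclideanSpace ℝ (Fin 3)) 1)

/-!
Proof idea: the support function is additive under Minkowski sums, so
`h_{K+tL} / h_L = h_K / h_L + t` and both `r_o` and `R_o` move by `t` when `K` is replaced by
`K + tL`. Writing `r = s + t` with `s ∈ [r_o(K,L), R_o(K,L)]`, the first Bonnesen function of
`K + tL` at `r` is exactly `B₀(s) + t B₁(s)`, which is nonnegative.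
-/

section SupportFunction

variable {K L : Set (EuclideanSpace ℝ (Fin 3))} {u : EuclideanSpace ℝ (Fin 3)}

theorem supp_eq_sSup_innerSL (K : Set (EuclideanSpace ℝ (Fin 3))) (u : EuclideanSpace ℝ (Fin 3)) :
    supp K u = sSup (innerSL ℝ u '' K) :=
  congrArg sSup <| Set.image_congr fun x _ => (real_inner_comm x u).symm

theorem bddAbove_innerSL_image (hK : Bornology.IsBounded K) (u : EuclideanSpace ℝ (Fin 3)) :
    BddAbove (innerSL ℝ u '' K) :=
  ((innerSL ℝ u).lipschitz.isBounded_image hK).bddAbove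

theorem inner_le_supp (hK : Bornology.IsBounded K) {x : EuclideanSpace ℝ (Fin 3)} (hx : x ∈ K) :
    ⟪x, u⟫ ≤ supp K u := by
  rw [supp_eq_sSup_innerSL, ← real_inner_comm x u]
  exact le_csSup (bddAbove_innerSL_image hK u) ⟨x, hx, rfl⟩

theorem supp_add (hKne : K.Nonempty) (hK : Bornology.IsBounded K) (hLne : L.Nonempty)
    (hL : Bornology.IsBounded L) (u : EuclideanSpace ℝ (Fin 3)) :
    supp (K + L) u = supp K u + supp L u := by
  simp only [supp_eq_sSup_innerSL, Set.image_add]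
  exact csSup_add (hKne.image _) (bddAbove_innerSL_image hK u) (hLne.image _)
    (bddAbove_innerSL_image hL u)

theorem supp_smul {t : ℝ} (ht : 0 ≤ t) (L : Set (EuclideanSpace ℝ (Fin 3)))
    (u : EuclideanSpace ℝ (Fin 3)) : supp (t • L) u = t * supp L u := by
  simp only [supp_eq_sSup_innerSL, image_smul_set, Real.sSup_smul_of_nonneg ht, smul_eq_mul]

theorem abs_supp_le (hKne : K.Nonempty) {M : ℝ} (hM : K ⊆ closedBall 0 M) :
    |supp K u| ≤ M * ‖u‖ := by
  have hK : Bornology.IsBounded K := isBounded_closedBall.subset hM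
  have hnorm : ∀ x ∈ K, ‖x‖ ≤ M := fun x hx => by simpa using hM hx
  obtain ⟨x, hx⟩ := hKne
  rw [abs_le]
  constructor
  · calc -(M * ‖u‖) ≤ -(‖x‖ * ‖u‖) := by gcongr; exact hnorm x hx
      _ ≤ ⟪x, u⟫ := neg_le_of_abs_le (abs_real_inner_le_norm x u)
      _ ≤ supp K u := inner_le_supp hK hx
  · rw [supp_eq_sSup_innerSL]
    refine csSup_le ⟨_, x, hx, rfl⟩ ?_
    rintro _ ⟨y, hy, rfl⟩
    calc innerSL ℝ u y ≤ ‖u‖ * ‖y‖ := real_inner_le_norm u y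
      _ ≤ M * ‖u‖ := by rw [mul_comm]; gcongr; exact hnorm y hy

/-- Testing the support function at the boundary point `(δ / ‖u‖) • u` of the ball. -/
theorem mul_norm_le_supp (hK : Bornology.IsBounded K) {δ : ℝ} (hδ : 0 ≤ δ)
    (hball : closedBall 0 δ ⊆ K) (u : EuclideanSpace ℝ (Fin 3)) : δ * ‖u‖ ≤ supp K u := by
  have hmem : (δ / ‖u‖) • u ∈ K := hball <| by
    rcases eq_or_ne ‖u‖ 0 with hu | hu
    · simp [hu, hδ]
    · simp [norm_smul, abs_of_nonneg hδ, hu]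
  calc δ * ‖u‖ = ⟪(δ / ‖u‖) • u, u⟫ := by
        rw [real_inner_smul_left, real_inner_self_eq_norm_sq]
        rcases eq_or_ne ‖u‖ 0 with hu | hu
        · simp [hu]
        · field_simp
    _ ≤ supp K u := inner_le_supp hK hmem

theorem supp_pos (hK : Bornology.IsBounded K) (h0 : (0 : EuclideanSpace ℝ (Fin 3)) ∈ interior K)
    (hu : u ≠ 0) : 0 < supp K u := by
  obtain ⟨δ, hδ, hball⟩ := nhds_basis_closedBall.mem_iff.1 (mem_interior_iff_mem_nhds.1 h0)
  exact (mul_pos hδ (norm_pos_iff.2 hu)).trans_le (mul_norm_le_supp hK hδ.le hball u)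

end SupportFunction

section RelativeRadii

variable {K L : Set (EuclideanSpace ℝ (Fin 3))}

theorem isBounded_supp_div_image (hKne : K.Nonempty) (hK : Bornology.IsBounded K)
    (hL : Bornology.IsBounded L) (hL0 : (0 : EuclideanSpace ℝ (Fin 3)) ∈ interior L) :
    Bornology.IsBounded ((fun u => supp K u / supp L u) '' sphere 0 1) := by
  obtain ⟨M, hM⟩ := (isBounded_iff_subset_closedBall 0).1 hK
  obtain ⟨δ, hδ, hball⟩ := nhds_basis_closedBall.mem_iff.1 (mem_interior_iff_mem_nhds.1 hL0)
  refine isBounded_iff_forall_norm_le.2 ⟨M / δ, ?_⟩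
  rintro _ ⟨u, hu, rfl⟩
  rw [mem_sphere_zero_iff_norm] at hu
  have hLu : δ ≤ supp L u := by simpa [hu] using mul_norm_le_supp hL hδ.le hball u
  have hKu : |supp K u| ≤ M := by simpa [hu] using abs_supp_le (u := u) hKne hM
  rw [Real.norm_eq_abs, abs_div, abs_of_pos (hδ.trans_le hLu)]
  exact div_le_div₀ ((abs_nonneg _).trans hKu) hKu hδ hLu

theorem supp_add_smul_div_image (hKne : K.Nonempty) (hK : Bornology.IsBounded K)
    (hL : Bornology.IsBounded L) (hL0 : (0 : EuclideanSpace ℝ (Fin 3)) ∈ interior L)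
    {t : ℝ} (ht : 0 ≤ t) :
    (fun u => supp (K + t • L) u / supp L u) '' sphere 0 1 =
      (· + t) '' ((fun u => supp K u / supp L u) '' sphere 0 1) := by
  rw [Set.image_image]
  refine Set.image_congr fun u hu => ?_
  have hLu : supp L u ≠ 0 :=
    (supp_pos hL hL0 (ne_zero_of_mem_unit_sphere ⟨u, hu⟩)).ne'
  rw [supp_add hKne hK (Set.Nonempty.smul_set ⟨0, interior_subset hL0⟩) (hL.smul₀ t),
    supp_smul ht]
  field_simp

theorem rIn_add_smul (hKne : K.Nonempty) (hK : Bornology.IsBounded K)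
    (hL : Bornology.IsBounded L) (hL0 : (0 : EuclideanSpace ℝ (Fin 3)) ∈ interior L)
    {t : ℝ} (ht : 0 ≤ t) : rIn (K + t • L) L = rIn K L + t := by
  rw [rIn, rIn, supp_add_smul_div_image hKne hK hL hL0 ht]
  exact ((OrderIso.addRight t).map_csInf' ((NormedSpace.sphere_nonempty.2 zero_le_one).image _)
    (isBounded_supp_div_image hKne hK hL hL0).bddBelow).symm

theorem rOut_add_smul (hKne : K.Nonempty) (hK : Bornology.IsBounded K)
    (hL : Bornology.IsBounded L) (hL0 : (0 : EuclideanSpace ℝ (Fin 3)) ∈ interior L)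
    {t : ℝ} (ht : 0 ≤ t) : rOut (K + t • L) L = rOut K L + t := by
  rw [rOut, rOut, supp_add_smul_div_image hKne hK hL hL0 ht]
  exact ((OrderIso.addRight t).map_csSup' ((NormedSpace.sphere_nonempty.2 zero_le_one).image _)
    (isBounded_supp_div_image hKne hK hL hL0).bddAbove).symm

end RelativeRadii

theorem bonnesen_parallel_eq (W₀ W₁ W₂ W₃ t r : ℝ) :
    2 * (W₁ + 2 * W₂ * t + W₃ * t ^ 2) * r
        - (W₀ + 3 * W₁ * t + 3 * W₂ * t ^ 2 + W₃ * t ^ 3)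
        - (W₂ + W₃ * t) * r ^ 2 =
      (2 * W₁ * (r - t) - W₀ - W₂ * (r - t) ^ 2)
        + t * (2 * W₂ * (r - t) - W₁ - W₃ * (r - t) ^ 2) := by
  ring

theorem class_R1_and_R2_implies_parallel_body_R1_general
    (K L : Set (EuclideanSpace ℝ (Fin 3)))
    (hKc : IsCompact K)
    (hLc : IsCompact L)
    (hK0 : (0 : EuclideanSpace ℝ (Fin 3)) ∈ interior K)
    (hL0 : (0 : EuclideanSpace ℝ (Fin 3)) ∈ interior L)
    (W₀ W₁ W₂ W₃ : ℝ)
    (hR1 : ∀ r ∈ Set.Icc (rIn K L) (rOut K L), 2 * W₁ * r - W₀ - W₂ * r ^ 2 ≥ 0)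
    (hR2 : ∀ r ∈ Set.Icc (rIn K L) (rOut K L), 2 * W₂ * r - W₁ - W₃ * r ^ 2 ≥ 0) :
    ∀ t : ℝ, 0 ≤ t →
      ∀ r ∈ Set.Icc (rIn (K + t • L) L) (rOut (K + t • L) L),
        2 * (W₁ + 2 * W₂ * t + W₃ * t ^ 2) * r
            - (W₀ + 3 * W₁ * t + 3 * W₂ * t ^ 2 + W₃ * t ^ 3)
            - (W₂ + W₃ * t) * r ^ 2 ≥ 0 := by
  intro t ht r hr
  have hKne : K.Nonempty := ⟨0, interior_subset hK0⟩
  rw [rIn_add_smul hKne hKc.isBounded hLc.isBounded hL0 ht,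
    rOut_add_smul hKne hKc.isBounded hLc.isBounded hL0 ht] at hr
  have hs : r - t ∈ Set.Icc (rIn K L) (rOut K L) :=
    ⟨le_sub_iff_add_le.2 hr.1, sub_le_iff_le_add.2 hr.2⟩
  rw [bonnesen_parallel_eq]
  exact add_nonneg (hR1 _ hs) (mul_nonneg ht (hR2 _ hs))

/-- If `K` is in the class `ℜ₁` as well as in the class `ℜ₂` with respect to `L`,
then for every `t ≥ 0` the outer parallel body `K + tL` is in the class `ℜ₁` with respect to
`L`, whose relative quermassintegrals are `Wᵢᵗ = ∑_{k=0}^{3-i} C(3-i,k) W_{i+k} t^k`. -/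
theorem class_R1_and_R2_implies_parallel_body_R1
    (K L : Set (EuclideanSpace ℝ (Fin 3)))
    (hKc : IsCompact K) (hKconv : Convex ℝ K) (hKint : (interior K).Nonempty)
    (hLc : IsCompact L) (hLconv : Convex ℝ L) (hLint : (interior L).Nonempty)
    (hK0 : (0 : EuclideanSpace ℝ (Fin 3)) ∈ interior K)
    (hL0 : (0 : EuclideanSpace ℝ (Fin 3)) ∈ interior L)
    (W₀ W₁ W₂ W₃ : ℝ)
    (hW : ∀ t : ℝ, 0 ≤ t →
      (volume (K + t • L)).toReal = W₀ + 3 * W₁ * t + 3 * W₂ * t ^ 2 + W₃ * t ^ 3)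
    (hR1 : ∀ r ∈ Set.Icc (rIn K L) (rOut K L), 2 * W₁ * r - W₀ - W₂ * r ^ 2 ≥ 0)
    (hR2 : ∀ r ∈ Set.Icc (rIn K L) (rOut K L), 2 * W₂ * r - W₁ - W₃ * r ^ 2 ≥ 0) :
    ∀ t : ℝ, 0 ≤ t →
      ∀ r ∈ Set.Icc (rIn (K + t • L) L) (rOut (K + t • L) L),
        2 * (W₁ + 2 * W₂ * t + W₃ * t ^ 2) * r
            - (W₀ + 3 * W₁ * t + 3 * W₂ * t ^ 2 + W₃ * t ^ 3)
            - (W₂ + W₃ * t) * r ^ 2 ≥ 0 :=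
  class_R1_and_R2_implies_parallel_body_R1_general K L hKc hLc hK0 hL0 W₀ W₁ W₂ W₃ hR1 hR2
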